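/- arXiv:2212.12117 — 2 statements merged into one kernel-verified Lean document; each statement's English description precedes it below -/
import Mathlib

section
/- Let r ≥ 1 and let A be the matrix over F_2, with rows and columns indexed by F_2^r, defined by A_{u,w} = 1 if u + w is a standard basis vector e_i for some 1 ≤ i ≤ r (equivalently, u and w differ in exactly one coordinate), and A_{u,w} = 0 otherwise (this is the adjacency matrix over F_2 of the r-dimensional hypercube graph, the coset graph of the zero-codeword-only code). Then the rank of A over F_2 equals 2^r if r is odd, and equals 2^{r-1} if r is even. -/
/-!
Over `ZMod 2` the hypercube matrix is `∑ i, T i`, where `T i` is the permutation matrix of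
translation by `e i`. These matrices commute and square to `1`, so in characteristic two the
Frobenius identity gives `A ^ 2 = ∑ i, T i ^ 2 = r • 1`. For odd `r` the matrix `A` is its own
inverse. For even `r` we get `A * A = 0`, hence `2 * rank A ≤ 2 ^ r`; conversely the rows indexed
by `Fin.cons 1 v` and the columns indexed by `Fin.cons 0 w` form an identity submatrix of size
`2 ^ (r - 1)`.
-/

open Finset Matrix

theorem sum_pow_char_of_commute {R ι : Type*} [Semiring R] (p : ℕ) [Fact p.Prime] [CharP R p]
    (s : Finset ι) (f : ι → R) (hf : ∀ i ∈ s, ∀ j ∈ s, Commute (f i) (f j)) :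
    (∑ i ∈ s, f i) ^ p = ∑ i ∈ s, f i ^ p := by
  classical
  induction s using Finset.induction_on with
  | empty => simp [zero_pow (Fact.out : p.Prime).ne_zero]
  | insert a s ha ih =>
    have hs := fun i hi j hj => hf i (mem_insert_of_mem hi) j (mem_insert_of_mem hj)
    rw [sum_insert ha, sum_insert ha, ← ih hs]
    exact add_pow_char_of_commute _
      (Commute.sum_right _ _ _ fun j hj => hf a (mem_insert_self a s) j (mem_insert_of_mem hj))

namespace Matrix

theorem rank_eq_card_of_mul_self_eq_one {n K : Type*} [Fintype n] [DecidableEq n] [Field K]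
    {A : Matrix n n K} (h : A * A = 1) : A.rank = Fintype.card n :=
  rank_of_isUnit A ⟨⟨A, A, h, h⟩, rfl⟩

section AddCayley

variable {G : Type*} [AddCommGroup G] [DecidableEq G] (R : Type*) [Semiring R]

def addCayley (S : Finset G) : Matrix G G R :=
  ∑ s ∈ S, (Equiv.addRight s).permMatrix R

variable {R}

theorem permMatrix_addRight_mul [Fintype G] (a b : G) :
    (Equiv.addRight a).permMatrix R * (Equiv.addRight b).permMatrix R =
      (Equiv.addRight (a + b)).permMatrix R := by
  rw [← permMatrix_mul]
  congr 1
  ext x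
  simp [add_assoc]

theorem addCayley_apply (S : Finset G) (u w : G) :
    addCayley R S u w = if w - u ∈ S then 1 else 0 := by
  have hentry (s : G) :
      (Equiv.addRight s).permMatrix R u w = if s = w - u then 1 else 0 := by
    simp [PEquiv.toMatrix_apply, eq_sub_iff_add_eq']
  simp only [addCayley, sum_apply, hentry, sum_ite_eq']

theorem addCayley_sq [Fintype G] [CharP R 2] (S : Finset G) (hS : ∀ s ∈ S, s + s = 0) :
    addCayley R S ^ 2 = #S • (1 : Matrix G G R) := by
  rw [addCayley, sum_pow_char_of_commute 2, ← sum_const]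
  · refine sum_congr rfl fun s hs => ?_
    rw [sq, permMatrix_addRight_mul, hS s hs]
    simp
  · intro a _ b _
    simp only [Commute, SemiconjBy, permMatrix_addRight_mul, add_comm a]

end AddCayley

section Hypercube

variable (R : Type*) [Semiring R]

def hypercubeMatrix (r : ℕ) : Matrix (Fin r → ZMod 2) (Fin r → ZMod 2) R :=
  addCayley R (univ.image fun i => Pi.single i 1)

variable {R}

theorem hypercubeMatrix_apply {r : ℕ} (u w : Fin r → ZMod 2) :
    hypercubeMatrix R r u w = if ∃ i, u + w = Pi.single i 1 then 1 else 0 := by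
  simp [hypercubeMatrix, addCayley_apply, ZModModule.sub_eq_add, add_comm w, eq_comm]

theorem card_image_single_one (r : ℕ) :
    #(univ.image fun i : Fin r => (Pi.single i 1 : Fin r → ZMod 2)) = r := by
  rw [card_image_of_injective, card_univ, Fintype.card_fin]
  intro i j h
  simpa [Pi.single_apply, eq_comm] using congrFun h j

theorem hypercubeMatrix_sq [CharP R 2] (r : ℕ) : hypercubeMatrix R r ^ 2 = (r : R) • 1 := by
  rw [hypercubeMatrix, addCayley_sq _ fun s _ => ZModModule.add_self s, card_image_single_one,
    Nat.cast_smul_eq_nsmul]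

theorem exists_cons_one_eq_single_iff {m : ℕ} (x : Fin m → ZMod 2) :
    (∃ i, (Fin.cons 1 x : Fin (m + 1) → ZMod 2) = Pi.single i 1) ↔ x = 0 := by
  constructor
  · rintro ⟨i, hi⟩
    obtain rfl : i = 0 := by simpa [Pi.single_apply, eq_comm] using congrFun hi 0
    funext j
    simpa using congrFun hi j.succ
  · rintro rfl
    exact ⟨0, funext fun j => Fin.cases (by simp) (fun j => by simp) j⟩

theorem hypercubeMatrix_submatrix_cons_one_cons_zero {m : ℕ} :
    (hypercubeMatrix R (m + 1)).submatrix (Fin.cons 1) (Fin.cons 0) = 1 := by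
  ext u w
  have hsum : (Fin.cons 1 u + Fin.cons 0 w : Fin (m + 1) → ZMod 2) = Fin.cons 1 (u + w) := by
    funext j
    refine Fin.cases ?_ (fun j => ?_) j <;> simp
  simp only [submatrix_apply, hypercubeMatrix_apply, hsum, exists_cons_one_eq_single_iff,
    one_apply, ← ZModModule.sub_eq_add, sub_eq_zero]

end Hypercube

end Matrix

theorem rank_hypercube (r : ℕ) (hr : 1 ≤ r)
    (A : Matrix (Fin r → ZMod 2) (Fin r → ZMod 2) (ZMod 2))
    (hA : ∀ u w, A u w = if ∃ i : Fin r, u + w = Pi.single i 1 then 1 else 0) :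
    (Odd r → A.rank = 2 ^ r) ∧ (Even r → A.rank = 2 ^ (r - 1)) := by
  obtain rfl : A = hypercubeMatrix (ZMod 2) r := ext fun u w => by rw [hA, hypercubeMatrix_apply]
  have hcard : Fintype.card (Fin r → ZMod 2) = 2 ^ r := by simp
  have hsq : hypercubeMatrix (ZMod 2) r * hypercubeMatrix (ZMod 2) r = (r : ZMod 2) • 1 := by
    rw [← sq, hypercubeMatrix_sq]
  refine ⟨fun hodd => ?_, fun heven => ?_⟩
  · rw [ZMod.natCast_eq_one_iff_odd.mpr hodd, one_smul] at hsq
    rw [rank_eq_card_of_mul_self_eq_one hsq, hcard]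
  · rw [ZMod.natCast_eq_zero_iff_even.mpr heven, zero_smul] at hsq
    obtain ⟨m, rfl⟩ : ∃ m, r = m + 1 := ⟨r - 1, by omega⟩
    have hupper := rank_add_rank_le_card_of_mul_eq_zero hsq
    have hlower := rank_submatrix_le (hypercubeMatrix (ZMod 2) (m + 1)) (Fin.cons 1) (Fin.cons 0)
    rw [hypercubeMatrix_submatrix_cons_one_cons_zero, rank_one, Fintype.card_fun, ZMod.card,
      Fintype.card_fin] at hlower
    rw [hcard, pow_succ] at hupper
    rw [Nat.add_sub_cancel]
    omega
end

section
/- Let r ≥ 2 and let S_3 ⊆ F_2^3 × F_2^r × F_2^r be the set S_3 = {((0,0,0), 0_r, 0_r)} ∪ {((0,0,1), h, 0_r) : h ≠ 0} ∪ {((0,1,0), 0_r, 0_r), ((0,1,1), 0_r, 0_r)} ∪ {((1,0,0), 0_r, h) : h ≠ 0} ∪ {((1,0,1), h, 0_r) : h ≠ 0} ∪ {((1,1,0), 0_r, 0_r), ((1,1,1), 0_r, 0_r)}. Let A be the matrix over F_2 with rows and columns indexed by F_2^3 × F_2^r × F_2^r, with A_{x,y} = 1 if x + y ∈ S_3 and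 0 otherwise. Then the rank of A over F_2 is at most 2^{2r} + 12·2^r. -/
/-- Membership in the generator set `S₃`: the set of columns of the parity-check
matrix `H₃`. -/
def inS3 {r : ℕ}
    (p : (ZMod 2 × ZMod 2 × ZMod 2) × (Fin r → ZMod 2) × (Fin r → ZMod 2)) : Prop :=
  (p.1 = (0, 0, 0) ∧ p.2.1 = 0 ∧ p.2.2 = 0) ∨
  (p.1 = (0, 0, 1) ∧ p.2.1 ≠ 0 ∧ p.2.2 = 0) ∨
  (p.1 = (0, 1, 0) ∧ p.2.1 = 0 ∧ p.2.2 = 0) ∨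
  (p.1 = (0, 1, 1) ∧ p.2.1 = 0 ∧ p.2.2 = 0) ∨
  (p.1 = (1, 0, 0) ∧ p.2.1 = 0 ∧ p.2.2 ≠ 0) ∨
  (p.1 = (1, 0, 1) ∧ p.2.1 ≠ 0 ∧ p.2.2 = 0) ∨
  (p.1 = (1, 1, 0) ∧ p.2.1 = 0 ∧ p.2.2 = 0) ∨
  (p.1 = (1, 1, 1) ∧ p.2.1 = 0 ∧ p.2.2 = 0)

instance {r : ℕ}
    (p : (ZMod 2 × ZMod 2 × ZMod 2) × (Fin r → ZMod 2) × (Fin r → ZMod 2)) :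
    Decidable (inS3 p) := by
  unfold inS3; infer_instance

/-!
Modulo 2 the indicator of `S₃` is the sum of the indicators of three cosets of subgroups,
namely `{(c, 0, 0)}`, `{((c₁, 0, 1), h, 0)}` and `{((1, 0, 0), 0, h')}`, of indices `4^r`,
`4 · 2^r` and `8 · 2^r`. The sum-indicator matrix `[x + y ∈ φ⁻¹(c)]` of a coset is a
submatrix of the identity matrix indexed by the target of `φ`, so its rank is at most the
index, and rank is subadditive.
-/

namespace Matrix

theorem rank_add_le {m n K : Type*} [Fintype n] [Field K] (A B : Matrix m n K) :
    (A + B).rank ≤ A.rank + B.rank := by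
  have h : LinearMap.range (A + B).mulVecLin ≤
      LinearMap.range A.mulVecLin ⊔ LinearMap.range B.mulVecLin := by
    rw [mulVecLin_add]
    rintro v ⟨w, rfl⟩
    exact Submodule.add_mem_sup ⟨w, rfl⟩ ⟨w, rfl⟩
  exact (Submodule.finrank_mono h).trans (Submodule.finrank_add_le_finrank_add_finrank _ _)

end Matrix

section CosetIndicator

variable {G H R : Type*} [AddCommGroup G] [AddCommGroup H] [DecidableEq H]

def cosetIndicator [Zero R] [One R] (φ : G →+ H) (c : H) : Matrix G G R :=
  Matrix.of fun x y => if φ (x + y) = c then 1 else 0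

theorem cosetIndicator_eq_submatrix_one [Zero R] [One R] (φ : G →+ H) (c : H) :
    (cosetIndicator φ c : Matrix G G R) = (1 : Matrix H H R).submatrix φ (fun y => c - φ y) := by
  ext x y
  simp [cosetIndicator, Matrix.one_apply, eq_sub_iff_add_eq]

theorem rank_cosetIndicator_le [CommSemiring R] [StrongRankCondition R]
    [Fintype G] [Fintype H] (φ : G →+ H) (c : H) :
    (cosetIndicator φ c : Matrix G G R).rank ≤ Fintype.card H := by
  rw [cosetIndicator_eq_submatrix_one, ← Matrix.rank_one (R := R)]
  exact Matrix.rank_submatrix_le _ _ _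

end CosetIndicator

section S3

variable {r : ℕ}

theorem ite_inS3_eq (z : (ZMod 2 × ZMod 2 × ZMod 2) × (Fin r → ZMod 2) × (Fin r → ZMod 2)) :
    (if inS3 z then 1 else 0 : ZMod 2) =
      (if z.2 = 0 then 1 else 0) + (if (z.1.2, z.2.2) = ((0, 1), 0) then 1 else 0) +
        (if (z.1, z.2.1) = ((1, 0, 0), 0) then 1 else 0) := by
  obtain ⟨⟨a, b, c⟩, h, h'⟩ := z
  by_cases hh : h = 0 <;> by_cases hh' : h' = 0 <;>
    simp [inS3, Prod.ext_iff, hh, hh'] <;> revert a b c <;> decide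

theorem of_ite_inS3_eq_sum_cosetIndicator :
    (Matrix.of fun x y => if inS3 (x + y) then 1 else 0 :
        Matrix ((ZMod 2 × ZMod 2 × ZMod 2) × (Fin r → ZMod 2) × (Fin r → ZMod 2))
          ((ZMod 2 × ZMod 2 × ZMod 2) × (Fin r → ZMod 2) × (Fin r → ZMod 2)) (ZMod 2)) =
      cosetIndicator (AddMonoidHom.snd _ _) 0 +
      cosetIndicator (((AddMonoidHom.snd _ _).comp (AddMonoidHom.fst _ _)).prod
        ((AddMonoidHom.snd _ _).comp (AddMonoidHom.snd _ _))) ((0, 1), 0) +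
      cosetIndicator ((AddMonoidHom.fst _ _).prod
        ((AddMonoidHom.fst _ _).comp (AddMonoidHom.snd _ _))) ((1, 0, 0), 0) := by
  ext x y
  simp only [Matrix.add_apply, Matrix.of_apply, cosetIndicator, ite_inS3_eq]
  rfl

end S3

theorem rank_H3_coset_graph_general (r : ℕ)
    (A : Matrix ((ZMod 2 × ZMod 2 × ZMod 2) × (Fin r → ZMod 2) × (Fin r → ZMod 2))
         ((ZMod 2 × ZMod 2 × ZMod 2) × (Fin r → ZMod 2) × (Fin r → ZMod 2)) (ZMod 2))
    (hA : ∀ x y, A x y = if inS3 (x + y) then 1 else 0) :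
    A.rank ≤ 2 ^ (2 * r) + 12 * 2 ^ r := by
  obtain rfl : A = Matrix.of fun x y => if inS3 (x + y) then 1 else 0 := Matrix.ext hA
  rw [of_ite_inS3_eq_sum_cosetIndicator]
  calc _ ≤ _ := (Matrix.rank_add_le _ _).trans
          (add_le_add_left (Matrix.rank_add_le _ _) _)
    _ ≤ 2 ^ r * 2 ^ r + 2 * 2 * 2 ^ r + 2 * 2 * 2 * 2 ^ r := by
      gcongr <;> refine (rank_cosetIndicator_le _ _).trans_eq ?_ <;> simp
    _ = 2 ^ (2 * r) + 12 * 2 ^ r := by ring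

theorem rank_H3_coset_graph (r : ℕ) (hr : 2 ≤ r)
    (A : Matrix ((ZMod 2 × ZMod 2 × ZMod 2) × (Fin r → ZMod 2) × (Fin r → ZMod 2))
         ((ZMod 2 × ZMod 2 × ZMod 2) × (Fin r → ZMod 2) × (Fin r → ZMod 2)) (ZMod 2))
    (hA : ∀ x y, A x y = if inS3 (x + y) then 1 else 0) :
    A.rank ≤ 2 ^ (2 * r) + 12 * 2 ^ r :=
  rank_H3_coset_graph_general r A hA
end
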